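/- Let k be a field with char(k) ≠ 2,3 and let E: y² = x³ + Ax + B be an elliptic curve with A ≠ 0. Then the discriminant of the Hessian curve of E (in short Weierstrass form) equals -Δ(E)/(27A⁶); in particular it is nonzero, so the Hessian curve is again an elliptic curve. -/
import Mathlib


/-- for `E : y² = x³ + Ax + B` with `A ≠ 0` and `Δ(E) = -16(4A³+27B²) ≠ 0`,
the discriminant of the Hessian curve (short Weierstrass form with coefficients
`A' = -(A³/3+3B²)/A⁴`, `B' = -(A³B/3+2B³)/A⁶`) equals `-Δ(E)/(27A⁶)`; in particular it is
nonzero, so the Hessian curve is again elliptic. -/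
theorem hessian_discriminant {K : Type*} [Field K]
    (h2 : (2 : K) ≠ 0) (h3 : (3 : K) ≠ 0) (A B : K) (hA : A ≠ 0)
    (hΔ : (-16) * (4 * A ^ 3 + 27 * B ^ 2) ≠ 0) :
    (-16) * (4 * (-(A ^ 3 / 3 + 3 * B ^ 2) / A ^ 4) ^ 3 +
        27 * (-(A ^ 3 * B / 3 + 2 * B ^ 3) / A ^ 6) ^ 2) =
      -((-16) * (4 * A ^ 3 + 27 * B ^ 2)) / (27 * A ^ 6) ∧
    (-16) * (4 * (-(A ^ 3 / 3 + 3 * B ^ 2) / A ^ 4) ^ 3 +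
        27 * (-(A ^ 3 * B / 3 + 2 * B ^ 3) / A ^ 6) ^ 2) ≠ 0 := by
  have h27 : (27 : K) ≠ 0 := by
    have h : (27 : K) = 3 ^ 3 := by norm_num
    simpa [h] using pow_ne_zero 3 h3
  have key : (-16 : K) * (4 * (-(A ^ 3 / 3 + 3 * B ^ 2) / A ^ 4) ^ 3 +
        27 * (-(A ^ 3 * B / 3 + 2 * B ^ 3) / A ^ 6) ^ 2) =
      -((-16) * (4 * A ^ 3 + 27 * B ^ 2)) / (27 * A ^ 6) := by
    field_simp
    ring
  refine ⟨key, key ▸ ?_⟩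
  intro h
  have := (div_eq_zero_iff.mp h).resolve_right (mul_ne_zero h27 (pow_ne_zero 6 hA))
  exact hΔ (neg_eq_zero.mp this)
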